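/- arXiv:2410.08579 — 3 statements merged into one kernel-verified Lean document; each statement's English description precedes it below -/
import Mathlib

section
/- Let f be an analytic diffeomorphism of a polydisk U = o_K^m arising as the time-1 map of an analytic flow Φ: o_K × U → U (with Φ^n = f^n for all n ∈ Z). If a point y ∈ U satisfies f^k(y) = y for some k ≥ 1, then f(y) = y. That is, every periodic point of such an f is fixed. -/
open Filter Topology

/-
Let `y` be periodic of period `k`. Summing over the monomials in `y`, each coordinate of
`t ↦ Φ^t(y)` becomes a power series in `t` with bounded coefficients, convergent on the closed
unit disc. It takes the value `y` at every multiple of `k`, in particular at the points `k p^j`,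
which tend to `0` `p`-adically. By the identity theorem the series is constant, so
`f(y) = Φ^1(y) = y`.
-/

section Ultrametric

variable {K : Type*} [NormedField K] [IsUltrametricDist K]

theorem tsum_pow_mul_eq_tsum_tsum_mul_pow [CompleteSpace K] {β : Type*} {a : ℕ × β → K}
    (ha : Tendsto (‖a ·‖) cofinite (𝓝 0)) {s : K} (hs : ‖s‖ ≤ 1) :
    ∑' q, s ^ q.1 * a q = ∑' n, (∑' b, a (n, b)) * s ^ n := by
  have hsum : Summable fun q : ℕ × β => s ^ q.1 * a q := by
    refine NonarchimedeanAddGroup.summable_of_tendsto_cofinite_zero <|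
      squeeze_zero_norm (fun q => ?_) ha
    rw [norm_mul, norm_pow]
    exact mul_le_of_le_one_left (norm_nonneg _) (pow_le_one₀ (norm_nonneg _) hs)
  rw [hsum.tsum_prod]
  exact tsum_congr fun n => by rw [← tsum_mul_right]; exact tsum_congr fun b => mul_comm _ _

theorem exists_norm_tsum_slice_le {β : Type*} {a : ℕ × β → K}
    (ha : Tendsto (‖a ·‖) cofinite (𝓝 0)) : ∃ C, ∀ n, ‖∑' b, a (n, b)‖ ≤ C := by
  obtain ⟨C, hC⟩ := ha.bddAbove_range_of_cofinite
  exact ⟨max C 0, fun n => IsUltrametricDist.norm_tsum_le_of_forall_le_of_nonneg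
    (le_max_right _ _) fun b => le_max_of_le_left (hC ⟨(n, b), rfl⟩)⟩

theorem tendsto_natCast_mul_pow_nhdsNE_zero [CharZero K] {k p : ℕ} (hk : k ≠ 0) (hp₀ : p ≠ 0)
    (hp : ‖(p : K)‖ < 1) : Tendsto (fun j : ℕ => ((k * p ^ j : ℕ) : K)) atTop (𝓝[≠] 0) := by
  refine tendsto_nhdsWithin_iff.2 ⟨?_, Eventually.of_forall fun j => by simp [hk, hp₀]⟩
  refine squeeze_zero_norm (fun j => ?_) (tendsto_pow_atTop_nhds_zero_of_lt_one (norm_nonneg _) hp)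
  rw [Nat.cast_mul, Nat.cast_pow, norm_mul, norm_pow]
  exact mul_le_of_le_one_left (by positivity) (IsUltrametricDist.norm_natCast_le_one K k)

end Ultrametric

theorem norm_prod_pow_le_one {K ι : Type*} [NormedField K] [Fintype ι] {y : ι → K}
    (hy : ∀ j, ‖y j‖ ≤ 1) (α : ι → ℕ) : ‖∏ j, y j ^ α j‖ ≤ 1 := by
  rw [norm_prod]
  exact Finset.prod_le_one (fun _ _ => norm_nonneg _) fun j _ => by
    rw [norm_pow]; exact pow_le_one₀ (norm_nonneg _) (hy j)

section Analytic

variable {K : Type*} [NontriviallyNormedField K] [CompleteSpace K]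

theorem eq_single_of_frequently_tsum_mul_pow_eq {c : ℕ → K} {C : ℝ} (hc : ∀ n, ‖c n‖ ≤ C)
    {a : K} (h : ∃ᶠ s in 𝓝[≠] 0, ∑' n, c n * s ^ n = a) : c = Pi.single 0 a := by
  set P := FormalMultilinearSeries.ofScalars K c
  have hrad : 0 < P.radius := zero_lt_one.trans_le <| by
    simpa using P.le_radius_of_bound C (r := 1) fun n => by
      simpa [P, FormalMultilinearSeries.ofScalars_norm] using hc n
  have hP : HasFPowerSeriesAt P.sum P 0 := (P.hasFPowerSeriesOnBall hrad).hasFPowerSeriesAt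
  have hconst : P.sum =ᶠ[𝓝 0] fun _ => a := by
    refine (hP.analyticAt.frequently_eq_iff_eventually_eq analyticAt_const).1 ?_
    rwa [show P.sum = fun s => ∑' n, c n * s ^ n from
      FormalMultilinearSeries.ofScalarsSum_eq_tsum c]
  have hPconst : P = constFormalMultilinearSeries K K a :=
    (hP.congr hconst).eq_formalMultilinearSeries hasFPowerSeriesAt_const
  funext n
  have := congrArg (FormalMultilinearSeries.coeff · n) hPconst
  simp only [P, FormalMultilinearSeries.coeff_ofScalars] at this
  rcases n with _ | n <;> simpa [FormalMultilinearSeries.coeff] using this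

theorem tsum_pow_mul_eq_of_frequently_eq [IsUltrametricDist K] {β : Type*} {a : ℕ × β → K}
    (ha : Tendsto (‖a ·‖) cofinite (𝓝 0)) {v : K}
    (h : ∃ᶠ s in 𝓝[≠] 0, ∑' q, s ^ q.1 * a q = v) {s : K} (hs : ‖s‖ ≤ 1) :
    ∑' q, s ^ q.1 * a q = v := by
  have hdisc : ∀ᶠ s : K in 𝓝[≠] 0, ‖s‖ ≤ 1 :=
    nhdsWithin_le_nhds <| mem_of_superset (Metric.closedBall_mem_nhds (0 : K) one_pos)
      fun _ => mem_closedBall_zero_iff.1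
  obtain ⟨C, hC⟩ := exists_norm_tsum_slice_le ha
  have hcoeff := eq_single_of_frequently_tsum_mul_pow_eq hC <|
    (h.and_eventually hdisc).mono fun s ⟨hv, hs⟩ =>
      (tsum_pow_mul_eq_tsum_tsum_mul_pow ha hs).symm.trans hv
  rw [tsum_pow_mul_eq_tsum_tsum_mul_pow ha hs]
  simp [funext_iff.1 hcoeff, Pi.single_apply]

end Analytic

theorem stmt8_general (p : ℕ) [Fact p.Prime]
    {K : Type*} [NormedField K] [CompleteSpace K] [IsUltrametricDist K]
    [Algebra ℚ_[p] K]
    (hKnorm : ∀ x : ℚ_[p], ‖algebraMap ℚ_[p] K x‖ = ‖x‖)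
    (m : ℕ)
    (e : ℕ × (Fin m → ℕ) → Fin m → K)
    (hedecay : ∀ i,
      Tendsto (fun q : ℕ × (Fin m → ℕ) => ‖e q i‖) cofinite (nhds 0))
    (Φ : K → (Fin m → K) → Fin m → K)
    (hΦ : ∀ t x i, Φ t x i
      = ∑' q : ℕ × (Fin m → ℕ), t ^ q.1 * (e q i * ∏ j, x j ^ q.2 j))
    (f : (Fin m → K) → Fin m → K) (hfdef : f = Φ 1)
    (hiter : ∀ n : ℕ, ∀ x, (∀ j, ‖x j‖ ≤ 1) → Φ (n : K) x = f^[n] x) :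
    ∀ y : Fin m → K, (∀ j, ‖y j‖ ≤ 1) →
      ∀ k : ℕ, 1 ≤ k → f^[k] y = y → f y = y := by
  intro y hy k hk hper
  have hpK : ‖(p : K)‖ = (p : ℝ)⁻¹ := by
    rw [← map_natCast (algebraMap ℚ_[p] K), hKnorm, Padic.norm_p]
  have hprime : p.Prime := Fact.out
  have hp : (1 : ℝ) < p := mod_cast hprime.one_lt
  let : NontriviallyNormedField K :=
    { ‹NormedField K› with non_trivial := ⟨(p : K)⁻¹, by rwa [norm_inv, hpK, inv_inv]⟩ }
  have : CharZero K := charZero_of_injective_algebraMap (algebraMap ℚ_[p] K).injective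
  have ht : Tendsto (fun j : ℕ => ((k * p ^ j : ℕ) : K)) atTop (𝓝[≠] 0) :=
    tendsto_natCast_mul_pow_nhdsNE_zero (by omega) hprime.ne_zero
      (hpK ▸ inv_lt_one_of_one_lt₀ hp)
  have hfix : ∀ j, Φ ((k * p ^ j : ℕ) : K) y = y := fun j => by
    rw [hiter _ _ hy, Function.iterate_mul, Function.iterate_fixed hper]
  subst hfdef
  funext i
  have ha : Tendsto (fun q => ‖e q i * ∏ j, y j ^ q.2 j‖) cofinite (𝓝 0) := by
    refine squeeze_zero (fun _ => norm_nonneg _) (fun q => ?_) (hedecay i)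
    rw [norm_mul]
    exact mul_le_of_le_one_right (norm_nonneg _) (norm_prod_pow_le_one hy q.2)
  rw [hΦ]
  refine tsum_pow_mul_eq_of_frequently_eq ha (ht.frequently (.of_forall fun j => ?_)) norm_one.le
  rw [← hΦ, hfix]

/-- if a Tate-analytic self-map f of the unit polydisk o_K^m of a p-adic
local field K is the time-1 map of a Tate-analytic flow Φ (with Φ^n = f^n for all n),
then every periodic point of f is fixed. -/
theorem stmt8 (p : ℕ) [Fact p.Prime]
    {K : Type*} [NormedField K] [CompleteSpace K] [IsUltrametricDist K]
    [Algebra ℚ_[p] K] [FiniteDimensional ℚ_[p] K]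
    (hKnorm : ∀ x : ℚ_[p], ‖algebraMap ℚ_[p] K x‖ = ‖x‖)
    (m : ℕ)
    (e : ℕ × (Fin m → ℕ) → Fin m → K)
    (he1 : ∀ q i, ‖e q i‖ ≤ 1)
    (hedecay : ∀ i,
      Tendsto (fun q : ℕ × (Fin m → ℕ) => ‖e q i‖) cofinite (nhds 0))
    (Φ : K → (Fin m → K) → Fin m → K)
    (hΦ : ∀ t x i, Φ t x i
      = ∑' q : ℕ × (Fin m → ℕ), t ^ q.1 * (e q i * ∏ j, x j ^ q.2 j))
    (hstab : ∀ t x, ‖t‖ ≤ 1 → (∀ j, ‖x j‖ ≤ 1) → ∀ i, ‖Φ t x i‖ ≤ 1)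
    (hflow : ∀ s t x, ‖s‖ ≤ 1 → ‖t‖ ≤ 1 → (∀ j, ‖x j‖ ≤ 1) →
        Φ (s + t) x = Φ s (Φ t x))
    (f : (Fin m → K) → Fin m → K) (hfdef : f = Φ 1)
    (hiter : ∀ n : ℕ, ∀ x, (∀ j, ‖x j‖ ≤ 1) → Φ (n : K) x = f^[n] x) :
    ∀ y : Fin m → K, (∀ j, ‖y j‖ ≤ 1) →
      ∀ k : ℕ, 1 ≤ k → f^[k] y = y → f y = y :=
  stmt8_general p hKnorm m e hedecay Φ hΦ f hfdef hiter
end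

section
/- Let Γ₀ be a subgroup of SL_2(Z_p) whose closure in SL_2(Z_p) is open. Then for every u ∈ Z_p^2 \ {0}, the closure of the orbit Γ₀·u in Z_p^2 is open. -/
/-!
Let `H` be the closure of `Γ₀`, an open subgroup of `SL₂(ℤ_p)`. By continuity of the action,
`H` maps the orbit closure `O` into itself, so it suffices that `H • w` is a neighbourhood of
every `w ∈ O`. Since `SL₂(ℤ_p)` preserves the sup norm, such `w` are nonzero. Write `w = a • w'`
with `a` a coordinate of maximal norm, so that a coordinate of `w'` equals `1`. Then every `v`
with `‖v - w‖ ≤ ‖p ^ m * a‖` is `g • w` for an explicit triangular `g ≡ 1 mod p ^ m`, and these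
`g` lie in `H` once `m` is large.
-/

open Matrix Topology Filter Pointwise

theorem isOpen_closure_image_smul {G X : Type*} [Group G] [TopologicalSpace G]
    [TopologicalSpace X] [MulAction G X] [ContinuousSMul G X] {Γ : Subgroup G}
    (hΓ : IsOpen (closure (Γ : Set G))) {u : X}
    (h : ∀ x ∈ closure ((· • u) '' (Γ : Set G)), ∀ U ∈ 𝓝 (1 : G), (· • x) '' U ∈ 𝓝 x) :
    IsOpen (closure ((· • u) '' (Γ : Set G))) := by
  set O := (· • u) '' (Γ : Set G)
  have hΓO : (Γ : Set G) • O ⊆ O := by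
    rintro _ ⟨γ, hγ, _, ⟨δ, hδ, rfl⟩, rfl⟩
    exact ⟨γ * δ, Γ.mul_mem hγ hδ, mul_smul γ δ u⟩
  refine isOpen_iff_mem_nhds.mpr fun x hx => mem_of_superset
    (h x hx _ (hΓ.mem_nhds (subset_closure Γ.one_mem))) ?_
  rintro _ ⟨g, hg, rfl⟩
  exact closure_mono hΓO (smul_set_closure_subset _ _ (Set.smul_mem_smul hg hx))

namespace Matrix.SpecialLinearGroup

section Topology

variable {n R : Type*} [Fintype n] [DecidableEq n] [CommRing R] [TopologicalSpace R]

instance : TopologicalSpace (SpecialLinearGroup n R) :=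
  .induced (fun g => (g : Matrix n n R)) inferInstance

theorem continuous_coe : Continuous (fun g : SpecialLinearGroup n R => (g : Matrix n n R)) :=
  continuous_induced_dom

instance [IsTopologicalRing R] : ContinuousSMul (SpecialLinearGroup n R) (n → R) :=
  ⟨(continuous_coe.comp continuous_fst).matrix_mulVec continuous_snd⟩

end Topology

theorem exists_dvd_sub_one_smul_eq_add {R : Type*} [CommRing R]
    {π : R} (hπ : π ∈ (⊥ : Ideal R).jacobson) {w : Fin 2 → R} {k : Fin 2} (hk : w k = 1)
    (c : Fin 2 → R) :
    ∃ g : SpecialLinearGroup (Fin 2) R,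
      (∀ i j, π ∣ (g : Matrix (Fin 2) (Fin 2) R) i j - (1 : Matrix (Fin 2) (Fin 2) R) i j) ∧
      g • w = w + π • c := by
  obtain ⟨α, hα⟩ := Ideal.mem_jacobson_bot.mp hπ (c k)
  set β : R := ↑α⁻¹
  have hαβ : (α : R) * β = 1 := α.mul_inv
  have hα1 : π ∣ (α : R) - 1 := ⟨c k, by rw [hα]; ring⟩
  have hβ1 : π ∣ β - 1 := ⟨-(c k * β), by linear_combination hαβ - β * hα⟩
  match k, hk, hα with
  | 0, hk, hα =>
    let g : SpecialLinearGroup (Fin 2) R :=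
      ⟨!![↑α, 0; π * (w 1 * β * c 0 + c 1), β], by simp [det_fin_two, hαβ]⟩
    refine ⟨g, by simp [g, Fin.forall_fin_two, hα1, hβ1], ?_⟩
    rw [Matrix.SpecialLinearGroup.smul_def, smul_eq_mulVec]
    ext i
    fin_cases i <;> simp [g, hk, mulVec, dotProduct, Fin.sum_univ_two]
    · linear_combination hα
    · linear_combination w 1 * hαβ - w 1 * β * hα
  | 1, hk, hα =>
    let g : SpecialLinearGroup (Fin 2) R :=
      ⟨!![β, π * (w 0 * β * c 1 + c 0); 0, ↑α], by simp [det_fin_two, mul_comm, hαβ]⟩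
    refine ⟨g, by simp [g, Fin.forall_fin_two, hα1, hβ1], ?_⟩
    rw [Matrix.SpecialLinearGroup.smul_def, smul_eq_mulVec]
    ext i
    fin_cases i <;> simp [g, hk, mulVec, dotProduct, Fin.sum_univ_two]
    · linear_combination w 0 * hαβ - w 0 * β * hα
    · linear_combination hα

end Matrix.SpecialLinearGroup

namespace PadicInt

variable {p : ℕ} [Fact p.Prime]

theorem dvd_of_norm_le {x y : ℤ_[p]} (hx : x ≠ 0) (h : ‖y‖ ≤ ‖x‖) : x ∣ y := by
  have hx' : (x : ℚ_[p]) ≠ 0 := by simpa using hx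
  refine ⟨⟨y / x, ?_⟩, Subtype.ext ?_⟩
  · rw [norm_div, padic_norm_e_of_padicInt, padic_norm_e_of_padicInt]
    exact div_le_one_of_le₀ h (norm_nonneg _)
  · exact (mul_div_cancel₀ _ hx').symm

theorem norm_mulVec_le {n : Type*} [Fintype n] (A : Matrix n n ℤ_[p]) (v : n → ℤ_[p]) :
    ‖A *ᵥ v‖ ≤ ‖v‖ :=
  (pi_norm_le_iff_of_nonneg (norm_nonneg v)).mpr fun _ =>
    IsUltrametricDist.norm_sum_le_of_forall_le_of_nonneg (norm_nonneg v) fun j _ =>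
      (norm_mul_le _ _).trans <|
        (mul_le_of_le_one_left (norm_nonneg _) (norm_le_one _)).trans (norm_le_pi_norm v j)

theorem norm_specialLinearGroup_smul {n : Type*} [Fintype n] [DecidableEq n]
    (g : SpecialLinearGroup n ℤ_[p]) (v : n → ℤ_[p]) : ‖g • v‖ = ‖v‖ :=
  le_antisymm (norm_mulVec_le _ v) <| calc
    ‖v‖ = ‖g⁻¹ • g • v‖ := by rw [inv_smul_smul]
    _ ≤ ‖g • v‖ := norm_mulVec_le _ _

theorem exists_forall_pow_dvd_mem_of_mem_nhds_one {n : Type*} [Fintype n] [DecidableEq n]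
    {U : Set (SpecialLinearGroup n ℤ_[p])} (hU : U ∈ 𝓝 1) :
    ∃ m : ℕ, ∀ g : SpecialLinearGroup n ℤ_[p],
      (∀ i j, (p : ℤ_[p]) ^ m ∣ (g : Matrix n n ℤ_[p]) i j - (1 : Matrix n n ℤ_[p]) i j) →
      g ∈ U := by
  obtain ⟨V, hV, hVU⟩ := (mem_nhds_induced _ _ _).mp hU
  obtain ⟨ε, hε, hball⟩ := (Metric.mem_nhds_iff (α := n → n → ℤ_[p])).mp hV
  obtain ⟨m, hm⟩ := exists_pow_lt_of_lt_one hε (mem_nonunits.mp (p_nonunit (p := p)))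
  refine ⟨m, fun g hg => hVU <| hball <| Metric.mem_ball.mpr <|
    (dist_pi_lt_iff hε).mpr fun i => (dist_pi_lt_iff hε).mpr fun j => ?_⟩
  obtain ⟨c, hc⟩ := hg i j
  change ‖(g : Matrix n n ℤ_[p]) i j - (1 : Matrix n n ℤ_[p]) i j‖ < ε
  rw [hc, norm_mul, norm_pow]
  exact (mul_le_of_le_one_right (by positivity) (norm_le_one c)).trans_lt hm

theorem image_smul_mem_nhds {w : Fin 2 → ℤ_[p]} (hw : w ≠ 0)
    {U : Set (SpecialLinearGroup (Fin 2) ℤ_[p])} (hU : U ∈ 𝓝 1) : (· • w) '' U ∈ 𝓝 w := by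
  obtain ⟨m, hm⟩ := exists_forall_pow_dvd_mem_of_mem_nhds_one hU
  set π : ℤ_[p] := p ^ (m + 1)
  have hπ : π ∈ (⊥ : Ideal ℤ_[p]).jacobson := by
    rw [IsLocalRing.jacobson_eq_maximalIdeal ⊥ bot_ne_top, maximalIdeal_eq_span_p]
    exact Ideal.mem_span_singleton.mpr (dvd_pow_self _ m.succ_ne_zero)
  obtain ⟨k, hk⟩ := Finite.exists_max (fun i => ‖w i‖)
  have hwk : w k ≠ 0 := fun h =>
    hw <| funext fun i => norm_le_zero_iff.mp <| (hk i).trans (by simp [h])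
  choose w' hw' using fun i => dvd_of_norm_le hwk (hk i)
  have hw'k : w' k = 1 := mul_left_cancel₀ hwk (by rw [← hw' k, mul_one])
  have hπw : π * w k ≠ 0 :=
    mul_ne_zero (pow_ne_zero _ (Nat.cast_ne_zero.mpr (Fact.out : p.Prime).ne_zero)) hwk
  refine mem_of_superset (Metric.closedBall_mem_nhds w (norm_pos_iff.mpr hπw)) fun v hv => ?_
  choose c hc using fun i => dvd_of_norm_le hπw
    ((norm_le_pi_norm (v - w) i).trans (mem_closedBall_iff_norm.mp hv))
  obtain ⟨g, hg_dvd, hg_smul⟩ := SpecialLinearGroup.exists_dvd_sub_one_smul_eq_add hπ hw'k c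
  refine ⟨g, hm g fun i j => (pow_dvd_pow _ m.le_succ).trans (hg_dvd i j), ?_⟩
  have hww' : w = w k • w' := funext hw'
  calc g • w = g • (w k • w') := by rw [← hww']
    _ = w k • (w' + π • c) := by rw [smul_comm, hg_smul]
    _ = v := by
      ext i
      have := hc i
      simp only [Pi.sub_apply] at this
      simp only [Pi.smul_apply, Pi.add_apply, smul_eq_mul]
      linear_combination -this - hw' i

end PadicInt

/-- if a subgroup Γ₀ of SL₂(ℤ_p) has open closure in SL₂(ℤ_p), then the
closure of the orbit Γ₀·u of any nonzero vector u ∈ ℤ_p² is open. SL₂(ℤ_p) carries the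
topology induced from the matrix space. -/
theorem stmt15 (p : ℕ) [Fact p.Prime]
    (Γ₀ : Subgroup (Matrix.SpecialLinearGroup (Fin 2) ℤ_[p])) :
    let _i : TopologicalSpace (Matrix.SpecialLinearGroup (Fin 2) ℤ_[p]) :=
      TopologicalSpace.induced
        (fun g => (g : Matrix (Fin 2) (Fin 2) ℤ_[p])) inferInstance
    IsOpen (closure (Γ₀ : Set (Matrix.SpecialLinearGroup (Fin 2) ℤ_[p]))) →
    ∀ u : Fin 2 → ℤ_[p], u ≠ 0 →
      IsOpen (closure {w : Fin 2 → ℤ_[p] | ∃ g ∈ Γ₀,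
        w = (g : Matrix (Fin 2) (Fin 2) ℤ_[p]).mulVec u}) := by
  intro _ hΓ u hu
  set O := (· • u) '' (Γ₀ : Set (Matrix.SpecialLinearGroup (Fin 2) ℤ_[p]))
  have horbit : {w : Fin 2 → ℤ_[p] | ∃ g ∈ Γ₀,
      w = (g : Matrix (Fin 2) (Fin 2) ℤ_[p]).mulVec u} = O := by
    ext w
    simp [O, eq_comm, Matrix.SpecialLinearGroup.smul_def]
  have hnorm : closure O ⊆ {w | ‖w‖ = ‖u‖} :=
    closure_minimal (by rintro _ ⟨g, -, rfl⟩; exact PadicInt.norm_specialLinearGroup_smul g u)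
      (isClosed_eq continuous_norm continuous_const)
  rw [horbit]
  exact isOpen_closure_image_smul hΓ fun w hw U hU => PadicInt.image_smul_mem_nhds
    (norm_ne_zero_iff.mp ((hnorm hw).trans_ne (norm_ne_zero_iff.mpr hu))) hU
end

section
/- Let S be the Markov surface x² + y² + z² + xyz = Ax + By + Cz + D over a p-adic local field K with A, B, C, D ∈ o_K, and let Γ be the group generated by the three Vieta involutions. A point (x,y,z) ∈ S(K) has bounded Γ-orbit if and only if (x,y,z) ∈ S(o_K). Consequently, S(o_K) is the unique maximal compact Γ-invariant subset of S(K). -/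
/-!
The integral points form a compact set which the Vieta involutions preserve, because the closed
unit ball of an ultrametric field is a ring. Conversely, let `(x, y, z)` be a point of the surface
with, say, `‖x‖ ≤ ‖z‖` and `1 < ‖z‖`. The equation is monic in `z` with integral coefficients once
`x, y` are integral, so `x` or `y` is not integral; after the move `s₂` if necessary, `‖y‖ > 1`.
Then `s₁` produces a point with `1 < ‖y‖` and `max ‖z‖ 1 < ‖x‖`. In an ultrametric field
`‖-z + C - x y‖ = ‖x‖ ‖y‖` as soon as `‖x y‖` beats `‖z‖` and `1`, so this shape is preserved by
`s₁ ∘ s₃`, which multiplies `‖x‖` by `‖y‖ ^ 2`: the orbit is unbounded. The cases where `x` or `y`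
has the largest norm follow by cyclically permuting the coordinates together with `A, B, C`.
-/

open Bornology IsUltrametricDist

namespace Markov

section Ring

variable {R : Type*} [CommRing R] {A B C D : R} {u v w : R × R × R}

def surface (A B C D : R) : Set (R × R × R) :=
  {v | v.1 ^ 2 + v.2.1 ^ 2 + v.2.2 ^ 2 + v.1 * v.2.1 * v.2.2
    = A * v.1 + B * v.2.1 + C * v.2.2 + D}

def vietaX (A : R) (v : R × R × R) : R × R × R := (-v.1 + A - v.2.1 * v.2.2, v.2.1, v.2.2)

def vietaY (B : R) (v : R × R × R) : R × R × R := (v.1, -v.2.1 + B - v.2.2 * v.1, v.2.2)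

def vietaZ (C : R) (v : R × R × R) : R × R × R := (v.1, v.2.1, -v.2.2 + C - v.1 * v.2.1)

def VietaStep (A B C : R) (u v : R × R × R) : Prop :=
  v = vietaX A u ∨ v = vietaY B u ∨ v = vietaZ C u

def orbit (A B C : R) (u : R × R × R) : Set (R × R × R) :=
  {v | Relation.ReflTransGen (VietaStep A B C) u v}

lemma vietaX_mem_surface (hv : v ∈ surface A B C D) : vietaX A v ∈ surface A B C D := by
  simp only [surface, vietaX, Set.mem_ofPred_eq] at hv ⊢
  linear_combination hv

lemma vietaY_mem_surface (hv : v ∈ surface A B C D) : vietaY B v ∈ surface A B C D := by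
  simp only [surface, vietaY, Set.mem_ofPred_eq] at hv ⊢
  linear_combination hv

lemma vietaZ_mem_surface (hv : v ∈ surface A B C D) : vietaZ C v ∈ surface A B C D := by
  simp only [surface, vietaZ, Set.mem_ofPred_eq] at hv ⊢
  linear_combination hv

lemma mem_orbit_self : u ∈ orbit A B C u := Relation.ReflTransGen.refl

lemma vietaX_mem_orbit (hv : v ∈ orbit A B C u) : vietaX A v ∈ orbit A B C u :=
  Relation.ReflTransGen.tail hv (Or.inl rfl)

lemma vietaY_mem_orbit (hv : v ∈ orbit A B C u) : vietaY B v ∈ orbit A B C u :=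
  Relation.ReflTransGen.tail hv (Or.inr (Or.inl rfl))

lemma vietaZ_mem_orbit (hv : v ∈ orbit A B C u) : vietaZ C v ∈ orbit A B C u :=
  Relation.ReflTransGen.tail hv (Or.inr (Or.inr rfl))

lemma orbit_subset {T : Set (R × R × R)}
    (hT : ∀ v ∈ T, vietaX A v ∈ T ∧ vietaY B v ∈ T ∧ vietaZ C v ∈ T) (hu : u ∈ T) :
    orbit A B C u ⊆ T := by
  intro v hv
  induction hv with
  | refl => exact hu
  | tail _ hstep ih => rcases hstep with rfl | rfl | rfl <;> simp only [hT _ ih]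

lemma iterate_mem_orbit (hw : w ∈ orbit A B C u) (n : ℕ) :
    (vietaX A ∘ vietaZ C)^[n] w ∈ orbit A B C u := by
  induction n with
  | zero => exact hw
  | succ n ih =>
    rw [Function.iterate_succ_apply']
    exact vietaX_mem_orbit (vietaZ_mem_orbit ih)

lemma orbit_subset_surface (hv : v ∈ surface A B C D) : orbit A B C v ⊆ surface A B C D :=
  orbit_subset
    (fun _ hw ↦ ⟨vietaX_mem_surface hw, vietaY_mem_surface hw, vietaZ_mem_surface hw⟩) hv

def rotate {α : Type*} (v : α × α × α) : α × α × α := (v.2.1, v.2.2, v.1)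

@[simp]
lemma rotate_rotate_rotate {α : Type*} (v : α × α × α) : rotate (rotate (rotate v)) = v := rfl

lemma rotate_mem_surface (hv : v ∈ surface A B C D) : rotate v ∈ surface B C A D := by
  simp only [surface, rotate, Set.mem_ofPred_eq] at hv ⊢
  linear_combination hv

lemma rotate_mem_orbit (hv : v ∈ orbit A B C u) : rotate v ∈ orbit B C A (rotate u) := by
  refine Relation.ReflTransGen.lift rotate (fun _ _ hstep => ?_) u v hv
  rcases hstep with rfl | rfl | rfl
  exacts [Or.inr (Or.inr rfl), Or.inl rfl, Or.inr (Or.inl rfl)]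

end Ring

lemma norm_rotate {E : Type*} [SeminormedAddGroup E] (v : E × E × E) : ‖rotate v‖ = ‖v‖ := by
  simp only [rotate, Prod.norm_def]
  rw [max_comm ‖v.2.2‖, max_left_comm]

section Normed

variable {R : Type*} [NormedCommRing R] {A B C D : R} {v : R × R × R}

lemma not_isBounded_orbit_of_rotate (h : ¬IsBounded (orbit A B C v)) :
    ¬IsBounded (orbit B C A (rotate v)) := by
  refine fun hbdd ↦ h (isBounded_iff_forall_norm_le.2 ?_)
  obtain ⟨r, hr⟩ := isBounded_iff_forall_norm_le.1 hbdd
  exact ⟨r, fun w hw ↦ norm_rotate w ▸ hr _ (rotate_mem_orbit hw)⟩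

def integralPoints (A B C D : R) : Set (R × R × R) :=
  {v ∈ surface A B C D | ‖v.1‖ ≤ 1 ∧ ‖v.2.1‖ ≤ 1 ∧ ‖v.2.2‖ ≤ 1}

lemma mem_integralPoints_iff : v ∈ integralPoints A B C D ↔ v ∈ surface A B C D ∧ ‖v‖ ≤ 1 := by
  simp only [integralPoints, Set.mem_sep_iff, norm_prod_le_iff]

lemma integralPoints_eq_inter_closedBall :
    integralPoints A B C D = surface A B C D ∩ Metric.closedBall 0 1 :=
  Set.ext fun _ ↦ by rw [mem_integralPoints_iff, Set.mem_inter_iff, mem_closedBall_zero_iff]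

lemma isCompact_integralPoints [ProperSpace R] : IsCompact (integralPoints A B C D) := by
  rw [integralPoints_eq_inter_closedBall]
  exact (isCompact_closedBall 0 1).inter_left (isClosed_eq (by fun_prop) (by fun_prop))

end Normed

section UltrametricGroup

variable {E : Type*} [SeminormedAddGroup E] [IsUltrametricDist E]

lemma norm_add_le_of_both_le {a b : E} {t : ℝ} (ha : ‖a‖ ≤ t) (hb : ‖b‖ ≤ t) : ‖a + b‖ ≤ t :=
  (norm_add_le_max a b).trans (max_le ha hb)

lemma norm_sub_le_of_both_le {a b : E} {t : ℝ} (ha : ‖a‖ ≤ t) (hb : ‖b‖ ≤ t) : ‖a - b‖ ≤ t := by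
  rw [sub_eq_add_neg]
  exact norm_add_le_of_both_le ha (by rwa [norm_neg])

end UltrametricGroup

section Ultrametric

variable {K : Type*} [NormedField K] [IsUltrametricDist K] {A B C D : K} {u v w : K × K × K}

lemma norm_neg_add_sub_mul_le_one {x c y z : K} (hx : ‖x‖ ≤ 1) (hc : ‖c‖ ≤ 1) (hy : ‖y‖ ≤ 1)
    (hz : ‖z‖ ≤ 1) : ‖-x + c - y * z‖ ≤ 1 :=
  norm_sub_le_of_both_le (norm_add_le_of_both_le (by rwa [norm_neg]) hc)
    (by rw [norm_mul]; exact mul_le_one₀ hy (norm_nonneg z) hz)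

lemma norm_neg_add_sub_mul_eq {x c y z : K} (hc : ‖c‖ ≤ 1) (h : max ‖x‖ 1 < ‖y‖ * ‖z‖) :
    ‖-x + c - y * z‖ = ‖y‖ * ‖z‖ := by
  have hsmall : ‖c - x‖ < ‖-(y * z)‖ := by
    rw [norm_neg, norm_mul]
    exact (norm_sub_le_of_both_le (hc.trans (le_max_right _ _)) (le_max_left _ _)).trans_lt h
  rw [show -x + c - y * z = c - x + -(y * z) by ring,
    norm_add_eq_max_of_norm_ne_norm hsmall.ne, max_eq_right hsmall.le, norm_neg, norm_mul]

lemma norm_z_le_one_of_mem_surface (hA : ‖A‖ ≤ 1) (hB : ‖B‖ ≤ 1) (hC : ‖C‖ ≤ 1)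
    (hD : ‖D‖ ≤ 1) (hv : v ∈ surface A B C D) (hx : ‖v.1‖ ≤ 1) (hy : ‖v.2.1‖ ≤ 1) :
    ‖v.2.2‖ ≤ 1 := by
  obtain ⟨x, y, z⟩ := v
  by_contra! hz
  have hsq : z ^ 2 = (A * x + B * y + D - x ^ 2 - y ^ 2) + (C - x * y) * z := by
    simp only [surface, Set.mem_ofPred_eq] at hv
    linear_combination hv
  have hconst : ‖A * x + B * y + D - x ^ 2 - y ^ 2‖ ≤ 1 := by
    refine norm_sub_le_of_both_le (norm_sub_le_of_both_le
      (norm_add_le_of_both_le (norm_add_le_of_both_le ?_ ?_) hD) ?_) ?_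
    all_goals simp only [norm_mul, norm_pow]
    exacts [mul_le_one₀ hA (norm_nonneg _) hx, mul_le_one₀ hB (norm_nonneg _) hy,
      pow_le_one₀ (norm_nonneg _) hx, pow_le_one₀ (norm_nonneg _) hy]
  have hlin : ‖(C - x * y) * z‖ ≤ ‖z‖ := by
    rw [norm_mul]
    refine mul_le_of_le_one_left (norm_nonneg z) (norm_sub_le_of_both_le hC ?_)
    rw [norm_mul]
    exact mul_le_one₀ hx (norm_nonneg y) hy
  have := norm_add_le_of_both_le (hconst.trans hz.le) hlin
  rw [← hsq, norm_pow] at this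
  nlinarith

def XDominant (v : K × K × K) : Prop := 1 < ‖v.2.1‖ ∧ max ‖v.2.2‖ 1 < ‖v.1‖

lemma xDominant_vietaX (hA : ‖A‖ ≤ 1) (hy : 1 < ‖v.2.1‖) (hz : 1 ≤ ‖v.2.2‖)
    (hxz : ‖v.1‖ ≤ ‖v.2.2‖) :
    XDominant (vietaX A v) ∧ ‖(vietaX A v).1‖ = ‖v.2.1‖ * ‖v.2.2‖ := by
  have hnorm : ‖(vietaX A v).1‖ = ‖v.2.1‖ * ‖v.2.2‖ :=
    norm_neg_add_sub_mul_eq hA (max_lt (by nlinarith) (by nlinarith))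
  refine ⟨⟨hy, ?_⟩, hnorm⟩
  show max ‖v.2.2‖ 1 < ‖(vietaX A v).1‖
  rw [hnorm]
  exact max_lt (by nlinarith) (by nlinarith)

lemma xDominant_vietaX_vietaZ (hA : ‖A‖ ≤ 1) (hC : ‖C‖ ≤ 1) (hv : XDominant v) :
    XDominant (vietaX A (vietaZ C v)) ∧
      ‖(vietaX A (vietaZ C v)).1‖ = ‖v.2.1‖ ^ 2 * ‖v.1‖ := by
  obtain ⟨hy, hxz⟩ := hv
  have hx : 1 < ‖v.1‖ := (le_max_right _ _).trans_lt hxz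
  have hz : ‖(vietaZ C v).2.2‖ = ‖v.1‖ * ‖v.2.1‖ :=
    norm_neg_add_sub_mul_eq hC (hxz.trans (by nlinarith))
  obtain ⟨hdom, hnorm⟩ := xDominant_vietaX (v := vietaZ C v) hA hy
    (by rw [hz]; nlinarith) (show ‖v.1‖ ≤ _ by rw [hz]; nlinarith)
  refine ⟨hdom, ?_⟩
  rw [hnorm, hz]
  exact (by ring : ‖v.2.1‖ * (‖v.1‖ * ‖v.2.1‖) = ‖v.2.1‖ ^ 2 * ‖v.1‖)

lemma xDominant_iterate (hA : ‖A‖ ≤ 1) (hC : ‖C‖ ≤ 1) (hv : XDominant v) (n : ℕ) :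
    XDominant ((vietaX A ∘ vietaZ C)^[n] v) ∧ ((vietaX A ∘ vietaZ C)^[n] v).2.1 = v.2.1 ∧
      ‖((vietaX A ∘ vietaZ C)^[n] v).1‖ = (‖v.2.1‖ ^ 2) ^ n * ‖v.1‖ := by
  induction n with
  | zero => simp [hv]
  | succ n ih =>
    obtain ⟨hdom, hy, hnorm⟩ := ih
    obtain ⟨hdom', hnorm'⟩ := xDominant_vietaX_vietaZ hA hC hdom
    rw [Function.iterate_succ_apply', Function.comp_apply]
    refine ⟨hdom', hy, ?_⟩
    rw [hnorm', hnorm, hy]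
    ring

lemma not_isBounded_orbit_of_xDominant (hA : ‖A‖ ≤ 1) (hC : ‖C‖ ≤ 1)
    (hw : w ∈ orbit A B C u) (hdom : XDominant w) : ¬IsBounded (orbit A B C u) := by
  intro hbdd
  obtain ⟨r, hr⟩ := isBounded_iff_forall_norm_le.1 hbdd
  obtain ⟨n, hn⟩ := pow_unbounded_of_one_lt r (one_lt_pow₀ hdom.1 two_ne_zero)
  obtain ⟨-, -, hnorm⟩ := xDominant_iterate hA hC hdom n
  have hx : 1 ≤ ‖w.1‖ := ((le_max_right _ _).trans_lt hdom.2).le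
  refine lt_irrefl r ?_
  calc r < (‖w.2.1‖ ^ 2) ^ n := hn
    _ ≤ (‖w.2.1‖ ^ 2) ^ n * ‖w.1‖ := le_mul_of_one_le_right (by positivity) hx
    _ = ‖((vietaX A ∘ vietaZ C)^[n] w).1‖ := hnorm.symm
    _ ≤ ‖(vietaX A ∘ vietaZ C)^[n] w‖ := norm_fst_le _
    _ ≤ r := hr _ (iterate_mem_orbit hw n)

lemma not_isBounded_orbit_of_norm_x_le_norm_z (hA : ‖A‖ ≤ 1) (hB : ‖B‖ ≤ 1) (hC : ‖C‖ ≤ 1)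
    (hD : ‖D‖ ≤ 1) (hv : v ∈ surface A B C D) (hxz : ‖v.1‖ ≤ ‖v.2.2‖) (hz : 1 < ‖v.2.2‖) :
    ¬IsBounded (orbit A B C v) := by
  by_cases hy : 1 < ‖v.2.1‖
  · exact not_isBounded_orbit_of_xDominant hA hC (vietaX_mem_orbit mem_orbit_self)
      (xDominant_vietaX hA hy hz.le hxz).1
  · push Not at hy
    have hx : 1 < ‖v.1‖ := by
      by_contra! hx
      exact (norm_z_le_one_of_mem_surface hA hB hC hD hv hx hy).not_gt hz
    have hy' : ‖(vietaY B v).2.1‖ = ‖v.2.2‖ * ‖v.1‖ :=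
      norm_neg_add_sub_mul_eq hB (max_lt (by nlinarith) (by nlinarith))
    exact not_isBounded_orbit_of_xDominant hA hC
      (vietaX_mem_orbit (vietaY_mem_orbit mem_orbit_self))
      (xDominant_vietaX (v := vietaY B v) hA (by rw [hy']; nlinarith) hz.le hxz).1

lemma not_isBounded_orbit (hA : ‖A‖ ≤ 1) (hB : ‖B‖ ≤ 1) (hC : ‖C‖ ≤ 1) (hD : ‖D‖ ≤ 1)
    (hv : v ∈ surface A B C D) (hv₁ : 1 < ‖v‖) : ¬IsBounded (orbit A B C v) := by
  have hx : ‖v.1‖ ≤ ‖v‖ := norm_fst_le v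
  have hy : ‖v.2.1‖ ≤ ‖v‖ := (norm_fst_le v.2).trans (norm_snd_le v)
  have hz : ‖v.2.2‖ ≤ ‖v‖ := (norm_snd_le v.2).trans (norm_snd_le v)
  rcases max_choice ‖v.1‖ ‖v.2‖ with hmax | hmax
  · have hxv : ‖v.1‖ = ‖v‖ := hmax.symm
    have h := not_isBounded_orbit_of_norm_x_le_norm_z hB hC hA hD (rotate_mem_surface hv)
      (hy.trans_eq hxv.symm : ‖v.2.1‖ ≤ ‖v.1‖) (hv₁.trans_eq hxv.symm : 1 < ‖v.1‖)
    simpa only [rotate_rotate_rotate] using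
      not_isBounded_orbit_of_rotate (not_isBounded_orbit_of_rotate h)
  rcases max_choice ‖v.2.1‖ ‖v.2.2‖ with hmax' | hmax'
  · have hyv : ‖v.2.1‖ = ‖v‖ := hmax'.symm.trans hmax.symm
    have h := not_isBounded_orbit_of_norm_x_le_norm_z hC hA hB hD
      (rotate_mem_surface (rotate_mem_surface hv))
      (hz.trans_eq hyv.symm : ‖v.2.2‖ ≤ ‖v.2.1‖) (hv₁.trans_eq hyv.symm : 1 < ‖v.2.1‖)
    simpa only [rotate_rotate_rotate] using not_isBounded_orbit_of_rotate h
  · have hzv : ‖v.2.2‖ = ‖v‖ := hmax'.symm.trans hmax.symm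
    exact not_isBounded_orbit_of_norm_x_le_norm_z hA hB hC hD hv (hx.trans_eq hzv.symm)
      (hv₁.trans_eq hzv.symm)

lemma vieta_mem_integralPoints (hA : ‖A‖ ≤ 1) (hB : ‖B‖ ≤ 1) (hC : ‖C‖ ≤ 1)
    (hv : v ∈ integralPoints A B C D) :
    vietaX A v ∈ integralPoints A B C D ∧ vietaY B v ∈ integralPoints A B C D ∧
      vietaZ C v ∈ integralPoints A B C D := by
  obtain ⟨hS, hx, hy, hz⟩ := hv
  exact ⟨⟨vietaX_mem_surface hS, norm_neg_add_sub_mul_le_one hx hA hy hz, hy, hz⟩,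
    ⟨vietaY_mem_surface hS, hx, norm_neg_add_sub_mul_le_one hy hB hz hx, hz⟩,
    ⟨vietaZ_mem_surface hS, hx, hy, norm_neg_add_sub_mul_le_one hz hC hx hy⟩⟩

lemma subset_integralPoints (hA : ‖A‖ ≤ 1) (hB : ‖B‖ ≤ 1) (hC : ‖C‖ ≤ 1) (hD : ‖D‖ ≤ 1)
    {T : Set (K × K × K)} (hTS : T ⊆ surface A B C D) (hT : IsBounded T)
    (hTinv : ∀ v ∈ T, vietaX A v ∈ T ∧ vietaY B v ∈ T ∧ vietaZ C v ∈ T) :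
    T ⊆ integralPoints A B C D := by
  intro v hv
  by_contra hv₀
  refine not_isBounded_orbit hA hB hC hD (hTS hv) ?_ (hT.subset (orbit_subset hTinv hv))
  by_contra! hv₁
  exact hv₀ (mem_integralPoints_iff.2 ⟨hTS hv, hv₁⟩)

lemma isBounded_orbit_iff (hA : ‖A‖ ≤ 1) (hB : ‖B‖ ≤ 1) (hC : ‖C‖ ≤ 1) (hD : ‖D‖ ≤ 1)
    (hv : v ∈ surface A B C D) : IsBounded (orbit A B C v) ↔ v ∈ integralPoints A B C D :=
  ⟨fun hbdd ↦ subset_integralPoints hA hB hC hD (orbit_subset_surface hv) hbdd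
      (fun _ hw ↦ ⟨vietaX_mem_orbit hw, vietaY_mem_orbit hw, vietaZ_mem_orbit hw⟩) mem_orbit_self,
    fun hv₀ ↦ Metric.isBounded_closedBall.subset <|
      (orbit_subset (fun _ ↦ vieta_mem_integralPoints hA hB hC) hv₀).trans <|
        integralPoints_eq_inter_closedBall.trans_subset Set.inter_subset_right⟩

end Ultrametric

end Markov

theorem stmt18_general
    {K : Type*} [NormedField K] [IsUltrametricDist K] [ProperSpace K]
    (A B C D : K) (hA : ‖A‖ ≤ 1) (hB : ‖B‖ ≤ 1) (hC : ‖C‖ ≤ 1) (hD : ‖D‖ ≤ 1) :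
    let S : Set (K × K × K) := {v | v.1 ^ 2 + v.2.1 ^ 2 + v.2.2 ^ 2 + v.1 * v.2.1 * v.2.2
        = A * v.1 + B * v.2.1 + C * v.2.2 + D}
    let s₁ : K × K × K → K × K × K := fun v => (-v.1 + A - v.2.1 * v.2.2, v.2.1, v.2.2)
    let s₂ : K × K × K → K × K × K := fun v => (v.1, -v.2.1 + B - v.2.2 * v.1, v.2.2)
    let s₃ : K × K × K → K × K × K := fun v => (v.1, v.2.1, -v.2.2 + C - v.1 * v.2.1)
    let step : K × K × K → K × K × K → Prop := fun u v => v = s₁ u ∨ v = s₂ u ∨ v = s₃ u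
    let orbit : K × K × K → Set (K × K × K) := fun u => {v | Relation.ReflTransGen step u v}
    let S₀ : Set (K × K × K) := {v ∈ S | ‖v.1‖ ≤ 1 ∧ ‖v.2.1‖ ≤ 1 ∧ ‖v.2.2‖ ≤ 1}
    (∀ v ∈ S, (Bornology.IsBounded (orbit v) ↔ v ∈ S₀)) ∧
    IsCompact S₀ ∧
    (∀ v ∈ S₀, s₁ v ∈ S₀ ∧ s₂ v ∈ S₀ ∧ s₃ v ∈ S₀) ∧
    (∀ Cs : Set (K × K × K), Cs ⊆ S → IsCompact Cs →
      (∀ v ∈ Cs, s₁ v ∈ Cs ∧ s₂ v ∈ Cs ∧ s₃ v ∈ Cs) → Cs ⊆ S₀) :=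
  ⟨fun _ hv ↦ Markov.isBounded_orbit_iff hA hB hC hD hv, Markov.isCompact_integralPoints,
    fun _ hv ↦ Markov.vieta_mem_integralPoints hA hB hC hv,
    fun _ hCS hCs hinv ↦ Markov.subset_integralPoints hA hB hC hD hCS hCs.isBounded hinv⟩

/-- on the Markov surface S : x²+y²+z²+xyz = Ax+By+Cz+D over a p-adic local
field K with A,B,C,D integral, a point of S(K) has bounded orbit under the group Γ
generated by the three Vieta involutions iff it lies in S(o_K); consequently S(o_K) is
the unique maximal compact Γ-invariant subset of S(K). -/
theorem stmt18 (p : ℕ) [Fact p.Prime]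
    {K : Type*} [NormedField K] [CompleteSpace K] [IsUltrametricDist K] [ProperSpace K]
    [Algebra ℚ_[p] K] [FiniteDimensional ℚ_[p] K]
    (hKnorm : ∀ x : ℚ_[p], ‖algebraMap ℚ_[p] K x‖ = ‖x‖)
    (A B C D : K) (hA : ‖A‖ ≤ 1) (hB : ‖B‖ ≤ 1) (hC : ‖C‖ ≤ 1) (hD : ‖D‖ ≤ 1) :
    let S : Set (K × K × K) := {v | v.1 ^ 2 + v.2.1 ^ 2 + v.2.2 ^ 2 + v.1 * v.2.1 * v.2.2
        = A * v.1 + B * v.2.1 + C * v.2.2 + D}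
    let s₁ : K × K × K → K × K × K := fun v => (-v.1 + A - v.2.1 * v.2.2, v.2.1, v.2.2)
    let s₂ : K × K × K → K × K × K := fun v => (v.1, -v.2.1 + B - v.2.2 * v.1, v.2.2)
    let s₃ : K × K × K → K × K × K := fun v => (v.1, v.2.1, -v.2.2 + C - v.1 * v.2.1)
    let step : K × K × K → K × K × K → Prop := fun u v => v = s₁ u ∨ v = s₂ u ∨ v = s₃ u
    let orbit : K × K × K → Set (K × K × K) := fun u => {v | Relation.ReflTransGen step u v}
    let S₀ : Set (K × K × K) := {v ∈ S | ‖v.1‖ ≤ 1 ∧ ‖v.2.1‖ ≤ 1 ∧ ‖v.2.2‖ ≤ 1}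
    (∀ v ∈ S, (Bornology.IsBounded (orbit v) ↔ v ∈ S₀)) ∧
    IsCompact S₀ ∧
    (∀ v ∈ S₀, s₁ v ∈ S₀ ∧ s₂ v ∈ S₀ ∧ s₃ v ∈ S₀) ∧
    (∀ Cs : Set (K × K × K), Cs ⊆ S → IsCompact Cs →
      (∀ v ∈ Cs, s₁ v ∈ Cs ∧ s₂ v ∈ Cs ∧ s₃ v ∈ Cs) → Cs ⊆ S₀) :=
  stmt18_general A B C D hA hB hC hD
end
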